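/- arXiv:2011.01295 — 2 statements merged into one kernel-verified Lean document; each statement's English description precedes it below -/
import Mathlib

section
/- Let N₀ ≥ 2, 0 = x_0 < x_1 < ⋯ < x_{N₀} = 1, with the conventions x_{−1} := 0 and x_{N₀+1} := 1. Let a : (0,1) → ℝ be continuous with a(x) > 0, let k, f : (0,1) → ℂ be continuous, and let g_0, g_1 ∈ ℂ. Let f_0, …, f_{N₀} : (0,1) → ℂ satisfy Σ_{j=0}^{N₀} f_j(x) = f(x) for all x ∈ (0,1) and f_j(x) = 0 for x ∉ (x_{j−1}, x_{j+1}). For each 0 ≤ j ≤ N₀, let u_j : [0,1] → ℂ be continuous with u_j = 0 on [0,1] ∖ [x_{j−1}, x_{j+1}], u_0(0) = g_0, u_{N₀}(1) = g_1, u_j(x_{j−1}) = 0 for j ≥ 1 and u_j(x_{j+1}) = 0 for j ≤ N₀−1, such that on (x_{j−1}, x_{j+1}) ∩ (0,1) the function u_j is differentiable, a·u_j' is differentiable, and (a u_j')' + k u_j = f_j; moreover, at each interior grid point x_m (1 ≤ m ≤ N₀−1) the one-sided limits lim_{x→x_m⁻} a(x)u_{m−1}'(x) and lim_{x→x_m⁺}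 a(x)u_{m+1}'(x) exist. For each 1 ≤ j ≤ N₀−1, let v_j : [0,1] → ℂ be continuous with v_j = 0 on [0,1] ∖ [x_{j−1}, x_{j+1}] and v_j(x_{j−1}) = v_j(x_{j+1}) = 0, such that on (x_{j−1}, x_j) ∪ (x_j, x_{j+1}) the function v_j is differentiable, a·v_j' is differentiable, and (a v_j')' + k v_j = 0; the one-sided limits of a·v_j' at x_{j−1}⁺, x_j⁻, x_j⁺ and x_{j+1}⁻ exist; and lim_{x→x_j⁺} a(x)v_j'(x) − lim_{x→x_j⁻} a(x)v_j'(x) = 1. Suppose μ_1, …, μ_{N₀−1} ∈ ℂ satisfy the linking equations: for every 1 ≤ m ≤ N₀−1 (with the conventions μ_0 = μ_{N₀} = 0 and v_0 = v_{N₀} = 0), μ_m + μ_{m+1}·lim_{x→x_m⁺} a(x)v_{m+1}'(x) − μ_{m−1}·lim_{x→x_m⁻} a(x)v_{m−1}'(x) + lim_{x→x_m⁺} a(x)u_{m+1}'(x) − lim_{x→x_m⁻} a(x)u_{m−1}'(x) = 0. Then the function u := Σ_{j=0}^{N₀} u_j + Σ_{j=1}^{N₀−1} μ_j v_j is continuous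 on [0,1] with u(0) = g_0 and u(1) = g_1; u is differentiable on (0,1); a·u' is differentiable on (0,1); and (a u')' + k u = f on (0,1). -/
/-!
On an open cell `(x m, x (m + 1))` only `u m`, `u (m + 1)`, `v m`, `v (m + 1)` can be nonzero,
so there `U` solves `(a U')' + k U = f_m + f_(m+1) = f` by linearity. At an interior node `x m`
the one-sided limits of the flux `a U'` coincide: their difference is exactly the left-hand side
of the `m`-th linking equation, the unit jump of `a v_m'` accounting for the term `μ_m`. A
function continuous at a point whose derivative has a limit there is differentiable there, with
that limit as derivative. Applied to `U` (with `U' = (a U') / a`) and then to `a U'` (with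
`(a U')' = f - k U`), this gives the equation at the node as well.
-/

open Filter Topology Set

theorem hasDerivAt_of_tendsto_deriv_nhdsNE {E : Type*} [NormedAddCommGroup E] [NormedSpace ℝ E]
    {f : ℝ → E} {p : ℝ} {e : E} (hf : ContinuousAt f p)
    (hdiff : ∀ᶠ z in 𝓝[≠] p, DifferentiableAt ℝ f z)
    (hderiv : Tendsto (deriv f) (𝓝[≠] p) (𝓝 e)) : HasDerivAt f e p := by
  have hs : DifferentiableOn ℝ f {z | DifferentiableAt ℝ f z} :=
    fun _ hz => hz.differentiableWithinAt
  have hleft : HasDerivWithinAt f e (Iic p) p :=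
    hasDerivWithinAt_Iic_of_tendsto_deriv hs hf.continuousWithinAt
      (nhdsLT_le_nhdsNE p hdiff) (hderiv.mono_left (nhdsLT_le_nhdsNE p))
  have hright : HasDerivWithinAt f e (Ici p) p :=
    hasDerivWithinAt_Ici_of_tendsto_deriv hs hf.continuousWithinAt
      (nhdsGT_le_nhdsNE p hdiff) (hderiv.mono_left (nhdsGT_le_nhdsNE p))
  simpa using hleft.union hright

noncomputable def flux (a : ℝ → ℝ) (w : ℝ → ℂ) (z : ℝ) : ℂ := (a z : ℂ) * deriv w z

def SolvesAt (a : ℝ → ℝ) (k w g : ℝ → ℂ) (y : ℝ) : Prop :=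
  DifferentiableAt ℝ w y ∧ DifferentiableAt ℝ (flux a w) y ∧
    deriv (flux a w) y + k y * w y = g y

def SolvesOn (a : ℝ → ℝ) (k w g : ℝ → ℂ) (S : Set ℝ) : Prop :=
  ∀ y ∈ S, SolvesAt a k w g y

section Equation

variable {a : ℝ → ℝ} {k w w₁ w₂ g g₁ g₂ : ℝ → ℂ} {S T : Set ℝ}

theorem flux_const_mul (a : ℝ → ℝ) (c : ℂ) (w : ℝ → ℂ) :
    flux a (fun t => c * w t) = fun z => c * flux a w z := by
  ext z
  simp only [flux, deriv_const_mul_field']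
  ring

theorem flux_add {z : ℝ} (h₁ : DifferentiableAt ℝ w₁ z) (h₂ : DifferentiableAt ℝ w₂ z) :
    flux a (w₁ + w₂) z = flux a w₁ z + flux a w₂ z := by
  simp only [flux, deriv_add h₁ h₂]
  ring

theorem SolvesOn.mono (h : SolvesOn a k w g S) (hTS : T ⊆ S) : SolvesOn a k w g T :=
  fun y hy => h y (hTS hy)

theorem SolvesOn.flux_add (h₁ : SolvesOn a k w₁ g₁ S) (h₂ : SolvesOn a k w₂ g₂ S) :
    EqOn (flux a (w₁ + w₂)) (flux a w₁ + flux a w₂) S :=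
  fun z hz => _root_.flux_add (h₁ z hz).1 (h₂ z hz).1

theorem SolvesOn.add (hS : IsOpen S) (h₁ : SolvesOn a k w₁ g₁ S) (h₂ : SolvesOn a k w₂ g₂ S) :
    SolvesOn a k (w₁ + w₂) (g₁ + g₂) S := by
  intro y hy
  obtain ⟨hd₁, hF₁, he₁⟩ := h₁ y hy
  obtain ⟨hd₂, hF₂, he₂⟩ := h₂ y hy
  have hF : flux a (w₁ + w₂) =ᶠ[𝓝 y] flux a w₁ + flux a w₂ :=
    eventuallyEq_of_mem (hS.mem_nhds hy) (h₁.flux_add h₂)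
  refine ⟨hd₁.add hd₂, hF.differentiableAt_iff.2 (hF₁.add hF₂), ?_⟩
  rw [hF.deriv_eq, deriv_add hF₁ hF₂]
  simp only [Pi.add_apply]
  linear_combination he₁ + he₂

theorem SolvesOn.const_mul (c : ℂ) (h : SolvesOn a k w g S) :
    SolvesOn a k (fun t => c * w t) (c • g) S := by
  intro y hy
  obtain ⟨hd, hF, he⟩ := h y hy
  refine ⟨hd.const_mul c, ?_, ?_⟩ <;> rw [flux_const_mul]
  · exact hF.const_mul c
  · rw [deriv_const_mul_field, Pi.smul_apply, smul_eq_mul]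
    linear_combination c * he

theorem solvesOn_zero (a : ℝ → ℝ) (k : ℝ → ℂ) (S : Set ℝ) : SolvesOn a k 0 0 S := by
  have hF : flux a 0 = 0 := by ext z; simp [flux]
  intro y _
  simp [SolvesAt, hF]

theorem flux_eqOn (hS : IsOpen S) (h : EqOn w₁ w₂ S) : EqOn (flux a w₁) (flux a w₂) S :=
  fun z hz => by simp only [flux, h.deriv hS hz]

theorem SolvesOn.congr (h : SolvesOn a k w₁ g₁ S) (hS : IsOpen S) (hw : EqOn w₁ w₂ S)
    (hg : EqOn g₁ g₂ S) : SolvesOn a k w₂ g₂ S := by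
  intro y hy
  obtain ⟨hd, hF, he⟩ := h y hy
  have hw' : w₁ =ᶠ[𝓝 y] w₂ := eventuallyEq_of_mem (hS.mem_nhds hy) hw
  have hF' : flux a w₁ =ᶠ[𝓝 y] flux a w₂ := eventuallyEq_of_mem (hS.mem_nhds hy) (flux_eqOn hS hw)
  refine ⟨hw'.differentiableAt_iff.1 hd, hF'.differentiableAt_iff.1 hF, ?_⟩
  rw [← hF'.deriv_eq, ← hw hy, ← hg hy, he]

theorem SolvesAt.of_tendsto_flux {p : ℝ} {L : ℂ}
    (hleft : ∀ᶠ z in 𝓝[<] p, SolvesAt a k w g z) (hright : ∀ᶠ z in 𝓝[>] p, SolvesAt a k w g z)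
    (hfluxL : Tendsto (flux a w) (𝓝[<] p) (𝓝 L)) (hfluxR : Tendsto (flux a w) (𝓝[>] p) (𝓝 L))
    (hw : ContinuousAt w p) (ha : ContinuousAt a p) (ha0 : a p ≠ 0) (hk : ContinuousAt k p)
    (hg : ContinuousAt g p) : SolvesAt a k w g p := by
  have hsol : ∀ᶠ z in 𝓝[≠] p, SolvesAt a k w g z := by
    rw [← nhdsLT_sup_nhdsGT]; exact eventually_sup.2 ⟨hleft, hright⟩
  have hflux : Tendsto (flux a w) (𝓝[≠] p) (𝓝 L) := by
    rw [← nhdsLT_sup_nhdsGT]; exact hfluxL.sup hfluxR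
  have ha' : ContinuousAt (fun z => (a z : ℂ)) p := Complex.continuous_ofReal.continuousAt.comp ha
  have ha0' : (a p : ℂ) ≠ 0 := Complex.ofReal_ne_zero.2 ha0
  have hderiv : Tendsto (deriv w) (𝓝[≠] p) (𝓝 ((a p : ℂ)⁻¹ * L)) := by
    refine ((ha'.inv₀ ha0').tendsto.mono_left nhdsWithin_le_nhds |>.mul hflux).congr' ?_
    filter_upwards [nhdsWithin_le_nhds (ha'.eventually_ne ha0')] with z hz
    simp only [flux, Pi.inv_apply, inv_mul_cancel_left₀ hz]
  have hw' := hasDerivAt_of_tendsto_deriv_nhdsNE hw (hsol.mono fun z hz => hz.1) hderiv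
  have hfluxC : ContinuousAt (flux a w) p := by
    rw [continuousAt_iff_punctured_nhds, flux, hw'.deriv, mul_inv_cancel_left₀ ha0']
    exact hflux
  have hderivF : Tendsto (deriv (flux a w)) (𝓝[≠] p) (𝓝 (g p - k p * w p)) := by
    refine ((hg.sub (hk.mul hw)).tendsto.mono_left nhdsWithin_le_nhds).congr' ?_
    filter_upwards [hsol] with z hz
    exact eq_sub_of_add_eq hz.2.2 |>.symm
  have hF' := hasDerivAt_of_tendsto_deriv_nhdsNE hfluxC (hsol.mono fun z hz => hz.2.1) hderivF
  exact ⟨hw'.differentiableAt, hF'.differentiableAt, by rw [hF'.deriv]; ring⟩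

end Equation

structure IsGrid (N : ℕ) (x : ℤ → ℝ) : Prop where
  ghost_left : x (-1) = 0
  first : x 0 = 0
  last : x N = 1
  ghost_right : x (N + 1) = 1
  lt_next : ∀ i : ℤ, 0 ≤ i → i < N → x i < x (i + 1)

namespace IsGrid

variable {N : ℕ} {x : ℤ → ℝ}

theorem strictMonoOn (hx : IsGrid N x) : StrictMonoOn x (Icc 0 N) :=
  strictMonoOn_of_lt_succ ordConnected_Icc fun i _ hi hi' => by
    rw [Order.succ_eq_add_one] at hi' ⊢
    exact hx.lt_next i hi.1 (by linarith [hi'.2])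

theorem monotoneOn (hx : IsGrid N x) : MonotoneOn x (Icc (-1) (N + 1)) :=
  monotoneOn_of_le_succ ordConnected_Icc fun i _ hi hi' => by
    rw [Order.succ_eq_add_one] at hi' ⊢
    rcases eq_or_lt_of_le hi.1 with rfl | hi₀
    · simp [hx.ghost_left, hx.first]
    rcases eq_or_lt_of_le hi'.2 with hiN | hiN
    · rw [hiN, show i = N by linarith, hx.last, hx.ghost_right]
    · exact (hx.lt_next i (by omega) (by linarith)).le

theorem mem_Icc (hx : IsGrid N x) {i : ℤ} (hi₀ : -1 ≤ i) (hiN : i ≤ N + 1) : x i ∈ Icc 0 1 := by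
  constructor
  · rw [← hx.ghost_left]; exact hx.monotoneOn ⟨le_rfl, by omega⟩ ⟨hi₀, hiN⟩ hi₀
  · rw [← hx.ghost_right]; exact hx.monotoneOn ⟨hi₀, hiN⟩ ⟨by omega, le_rfl⟩ hiN

theorem mem_Ioo (hx : IsGrid N x) {i : ℤ} (hi₀ : 0 < i) (hiN : i < N) : x i ∈ Ioo 0 1 := by
  constructor
  · rw [← hx.first]; exact hx.strictMonoOn ⟨le_rfl, by omega⟩ ⟨hi₀.le, hiN.le⟩ hi₀
  · rw [← hx.last]; exact hx.strictMonoOn ⟨hi₀.le, hiN.le⟩ ⟨by omega, le_rfl⟩ hiN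

theorem eq_node_or_mem_cell (hx : IsGrid N x) {y : ℝ} (hy : y ∈ Ioo 0 1) :
    (∃ m : ℕ, 1 ≤ m ∧ m ≤ N - 1 ∧ y = x m) ∨ ∃ m < N, y ∈ Ioo (x m) (x (m + 1)) := by
  have hex : ∃ n : ℕ, y < x n := ⟨N, hx.last ▸ hy.2⟩
  classical
  obtain ⟨m, hm⟩ : ∃ m, Nat.find hex = m + 1 :=
    Nat.exists_eq_succ_of_ne_zero fun h => by
      have := Nat.find_spec hex
      rw [h, Nat.cast_zero, hx.first] at this
      exact this.not_gt hy.1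
  have hym : y < x (m + 1) := by simpa [hm] using Nat.find_spec hex
  have hmy : x m ≤ y := not_lt.1 (Nat.find_min hex (by omega))
  have hmN : m < N := by
    have := Nat.find_min' hex (hx.last ▸ hy.2 : y < x N)
    omega
  rcases hmy.eq_or_lt with hmy | hmy
  · refine .inl ⟨m, Nat.one_le_iff_ne_zero.2 fun h => ?_, by omega, hmy.symm⟩
    rw [h, Nat.cast_zero, hx.first] at hmy
    exact hy.1.ne hmy
  · exact .inr ⟨m, hmN, hmy, hym⟩

theorem cell_subset (hx : IsGrid N x) {m : ℕ} (hm : m < N) :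
    Ioo (x m) (x (m + 1)) ⊆ Ioo 0 1 :=
  Ioo_subset_Ioo (hx.mem_Icc (by omega) (by omega)).1 (hx.mem_Icc (by omega) (by omega)).2

theorem notMem_Icc_of_mem_cell (hx : IsGrid N x) {m j : ℕ} {z : ℝ} (hm : m < N)
    (hz : z ∈ Ioo (x m) (x (m + 1))) (hj : j ≤ N) (hjm : j ≠ m) (hjm' : j ≠ m + 1) :
    z ∉ Icc (x (j - 1)) (x (j + 1)) := by
  rintro ⟨hz₁, hz₂⟩
  rcases lt_or_gt_of_ne hjm with hlt | hgt
  · have : x (j + 1) ≤ x m := hx.monotoneOn ⟨by omega, by omega⟩ ⟨by omega, by omega⟩ (by omega)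
    linarith [hz.1]
  · have : x (m + 1) ≤ x (j - 1) :=
      hx.monotoneOn ⟨by omega, by omega⟩ ⟨by omega, by omega⟩ (by omega)
    linarith [hz.2]

theorem cell_subset_left (hx : IsGrid N x) {m : ℕ} (hm : m < N) :
    Ioo (x m) (x (m + 1)) ⊆ Ioo (x (m - 1)) (x (m + 1)) :=
  Ioo_subset_Ioo_left (hx.monotoneOn ⟨by omega, by omega⟩ ⟨by omega, by omega⟩ (by omega))

theorem cell_subset_right (hx : IsGrid N x) {m : ℕ} (hm : m < N) :
    Ioo (x m) (x (m + 1)) ⊆ Ioo (x m) (x (m + 1 + 1)) :=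
  Ioo_subset_Ioo_right (hx.monotoneOn ⟨by omega, by omega⟩ ⟨by omega, by omega⟩ (by omega))

theorem cell_mem_nhdsGT (hx : IsGrid N x) {m : ℕ} (hm : m < N) :
    Ioo (x m) (x (m + 1)) ∈ 𝓝[>] x m :=
  Ioo_mem_nhdsGT (hx.strictMonoOn ⟨by omega, by omega⟩ ⟨by omega, by omega⟩ (lt_add_one _))

theorem cell_mem_nhdsLT (hx : IsGrid N x) {m : ℕ} (hm : m < N) :
    Ioo (x m) (x (m + 1)) ∈ 𝓝[<] x ↑(m + 1) := by
  push_cast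
  exact Ioo_mem_nhdsLT (hx.strictMonoOn ⟨by omega, by omega⟩ ⟨by omega, by omega⟩ (lt_add_one _))

theorem eventually_nhdsGT_of_cells (hx : IsGrid N x) {P : ℝ → Prop}
    (hP : ∀ m < N, ∀ z ∈ Ioo (x m) (x (m + 1)), P z) {m : ℕ} (hm : m < N) :
    ∀ᶠ z in 𝓝[>] x m, P z :=
  eventually_of_mem (hx.cell_mem_nhdsGT hm) (hP m hm)

theorem eventually_nhdsLT_of_cells (hx : IsGrid N x) {P : ℝ → Prop}
    (hP : ∀ m < N, ∀ z ∈ Ioo (x m) (x (m + 1)), P z) {m : ℕ} (hm₁ : 1 ≤ m) (hm : m ≤ N) :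
    ∀ᶠ z in 𝓝[<] x m, P z := by
  obtain ⟨n, rfl⟩ : ∃ n, m = n + 1 := ⟨m - 1, by omega⟩
  exact eventually_of_mem (hx.cell_mem_nhdsLT hm) (hP n hm)

end IsGrid

noncomputable def assemble (N : ℕ) (u v : ℕ → ℝ → ℂ) (μ : ℕ → ℂ) (y : ℝ) : ℂ :=
  ∑ j ∈ Finset.range (N + 1), u j y + ∑ j ∈ Finset.Icc 1 (N - 1), μ j * v j y

def VanishesOff (w : ℝ → ℂ) (c d : ℝ) : Prop :=
  ∀ y ∈ Icc (0 : ℝ) 1, y ∉ Icc c d → w y = 0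

theorem VanishesOff.apply_zero {w : ℝ → ℂ} {c d : ℝ} (hw : VanishesOff w c d) (hc : 0 ≤ c)
    (hwc : w c = 0) : w 0 = 0 := by
  rcases eq_or_lt_of_le hc with rfl | hc
  · exact hwc
  · exact hw 0 ⟨le_rfl, zero_le_one⟩ fun h => h.1.not_gt hc

theorem VanishesOff.apply_one {w : ℝ → ℂ} {c d : ℝ} (hw : VanishesOff w c d) (hd : d ≤ 1)
    (hwd : w d = 0) : w 1 = 0 := by
  rcases eq_or_lt_of_le hd with rfl | hd
  · exact hwd
  · exact hw 1 ⟨zero_le_one, le_rfl⟩ fun h => h.2.not_gt hd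

section Assembly

variable {N : ℕ} {x : ℤ → ℝ} {a : ℝ → ℝ} {k f : ℝ → ℂ} {fj u v : ℕ → ℝ → ℂ} {μ : ℕ → ℂ}

theorem continuousOn_assemble (huC : ∀ j ≤ N, ContinuousOn (u j) (Icc 0 1))
    (hvC : ∀ j : ℕ, 1 ≤ j → j ≤ N - 1 → ContinuousOn (v j) (Icc 0 1)) :
    ContinuousOn (assemble N u v μ) (Icc 0 1) := by
  refine .add (continuousOn_finsetSum _ fun j hj => huC j ?_)
    (continuousOn_finsetSum _ fun j hj => ?_)
  · exact Nat.lt_succ_iff.1 (Finset.mem_range.1 hj)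
  · obtain ⟨hj₁, hj₂⟩ := Finset.mem_Icc.1 hj
    exact continuousOn_const.mul (hvC j hj₁ hj₂)

theorem assemble_zero (hx : IsGrid N x)
    (husupp : ∀ j ≤ N, VanishesOff (u j) (x (j - 1)) (x (j + 1)))
    (huL : ∀ j : ℕ, 1 ≤ j → j ≤ N → u j (x (j - 1)) = 0)
    (hvsupp : ∀ j : ℕ, 1 ≤ j → j ≤ N - 1 → VanishesOff (v j) (x (j - 1)) (x (j + 1)))
    (hvL : ∀ j : ℕ, 1 ≤ j → j ≤ N - 1 → v j (x (j - 1)) = 0) :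
    assemble N u v μ 0 = u 0 0 := by
  have hu : ∀ j ∈ Finset.range (N + 1), j ≠ 0 → u j 0 = 0 := fun j hj hj₀ => by
    have hjN := Nat.lt_succ_iff.1 (Finset.mem_range.1 hj)
    exact (husupp j hjN).apply_zero (hx.mem_Icc (by omega) (by omega)).1 (huL j (by omega) hjN)
  have hv : ∀ j ∈ Finset.Icc 1 (N - 1), μ j * v j 0 = 0 := fun j hj => by
    obtain ⟨hj₁, hj₂⟩ := Finset.mem_Icc.1 hj
    rw [(hvsupp j hj₁ hj₂).apply_zero (hx.mem_Icc (by omega) (by omega)).1 (hvL j hj₁ hj₂),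
      mul_zero]
  rw [assemble, Finset.sum_eq_single_of_mem 0 (by simp) hu, Finset.sum_eq_zero hv, add_zero]

theorem assemble_one (hx : IsGrid N x)
    (husupp : ∀ j ≤ N, VanishesOff (u j) (x (j - 1)) (x (j + 1)))
    (huR : ∀ j : ℕ, j ≤ N - 1 → u j (x (j + 1)) = 0)
    (hvsupp : ∀ j : ℕ, 1 ≤ j → j ≤ N - 1 → VanishesOff (v j) (x (j - 1)) (x (j + 1)))
    (hvR : ∀ j : ℕ, 1 ≤ j → j ≤ N - 1 → v j (x (j + 1)) = 0) :
    assemble N u v μ 1 = u N 1 := by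
  have hu : ∀ j ∈ Finset.range (N + 1), j ≠ N → u j 1 = 0 := fun j hj hjN => by
    have hjN' := Nat.lt_succ_iff.1 (Finset.mem_range.1 hj)
    exact (husupp j hjN').apply_one (hx.mem_Icc (by omega) (by omega)).2 (huR j (by omega))
  have hv : ∀ j ∈ Finset.Icc 1 (N - 1), μ j * v j 1 = 0 := fun j hj => by
    obtain ⟨hj₁, hj₂⟩ := Finset.mem_Icc.1 hj
    rw [(hvsupp j hj₁ hj₂).apply_one (hx.mem_Icc (by omega) (by omega)).2 (hvR j hj₁ hj₂),
      mul_zero]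
  rw [assemble, Finset.sum_eq_single_of_mem N (by simp) hu, Finset.sum_eq_zero hv, add_zero]

theorem assemble_eqOn_cell (hx : IsGrid N x)
    (husupp : ∀ j ≤ N, VanishesOff (u j) (x (j - 1)) (x (j + 1)))
    (hvsupp : ∀ j : ℕ, 1 ≤ j → j ≤ N - 1 → VanishesOff (v j) (x (j - 1)) (x (j + 1)))
    (hμ0 : μ 0 = 0) (hμN : μ N = 0) {m : ℕ} (hm : m < N) :
    EqOn (assemble N u v μ)
      (u m + u (m + 1) + (fun t => μ m * v m t) + fun t => μ (m + 1) * v (m + 1) t)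
      (Ioo (x m) (x (m + 1))) := by
  intro z hz
  have hz01 : z ∈ Icc (0 : ℝ) 1 := Ioo_subset_Icc_self (hx.cell_subset hm hz)
  have hout {j : ℕ} (hjN : j ≤ N) (hj : j ≠ m ∧ j ≠ m + 1) :=
    hx.notMem_Icc_of_mem_cell hm hz hjN hj.1 hj.2
  have hu := Finset.sum_eq_add (s := Finset.range (N + 1)) (f := fun j => u j z) m (m + 1)
    (by omega) (fun j hj hjm => by
      have hjN : j ≤ N := by simp at hj; omega
      exact husupp j hjN z hz01 (hout hjN hjm))
    (fun h => absurd (by simp; omega) h) (fun h => absurd (by simp; omega) h)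
  have hv := Finset.sum_eq_add (s := Finset.Icc 1 (N - 1)) (f := fun j => μ j * v j z) m (m + 1)
    (by omega)
    (fun j hj hjm => by
      obtain ⟨hj₁, hj₂⟩ := Finset.mem_Icc.1 hj
      rw [hvsupp j hj₁ hj₂ z hz01 (hout (by omega) hjm), mul_zero])
    (fun h => by rw [show m = 0 by simp at h; omega, hμ0, zero_mul])
    (fun h => by rw [show m + 1 = N by simp at h; omega, hμN, zero_mul])
  simp only [assemble, hu, hv, Pi.add_apply]
  ring

theorem partition_eqOn_cell (hx : IsGrid N x)
    (hfj_sum : ∀ y ∈ Ioo (0 : ℝ) 1, ∑ j ∈ Finset.range (N + 1), fj j y = f y)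
    (hfj_supp : ∀ j ≤ N, ∀ y : ℝ, y ∉ Ioo (x (j - 1)) (x (j + 1)) → fj j y = 0)
    {m : ℕ} (hm : m < N) : EqOn f (fj m + fj (m + 1)) (Ioo (x m) (x (m + 1))) := by
  intro z hz
  rw [← hfj_sum z (hx.cell_subset hm hz), Pi.add_apply]
  refine Finset.sum_eq_add m (m + 1) (by omega) (fun j hj hjm => ?_)
    (fun h => absurd (by simp; omega) h) (fun h => absurd (by simp; omega) h)
  have hjN : j ≤ N := by simp at hj; omega
  exact hfj_supp j hjN z fun h =>
    hx.notMem_Icc_of_mem_cell hm hz hjN hjm.1 hjm.2 (Ioo_subset_Icc_self h)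

theorem solvesOn_cell_of_local
    (hx : IsGrid N x)
    (hueq : ∀ j ≤ N, SolvesOn a k (u j) (fj j) (Ioo (x (j - 1)) (x (j + 1)) ∩ Ioo 0 1))
    {m j : ℕ} (hm : m < N) (hj : j = m ∨ j = m + 1) :
    SolvesOn a k (u j) (fj j) (Ioo (x m) (x (m + 1))) := by
  rcases hj with rfl | rfl
  · exact (hueq j hm.le).mono (subset_inter (hx.cell_subset_left hm) (hx.cell_subset hm))
  · refine (hueq (m + 1) hm).mono (subset_inter ?_ (hx.cell_subset hm))
    push_cast
    simpa using hx.cell_subset_right hm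

theorem solvesOn_const_mul_cell_of_dirac
    (hveq : ∀ j : ℕ, 1 ≤ j → j ≤ N - 1 →
      SolvesOn a k (v j) 0 (Ioo (x (j - 1)) (x j) ∪ Ioo (x j) (x (j + 1))))
    (hμ0 : μ 0 = 0) (hμN : μ N = 0) {m j : ℕ} (hm : m < N) (hj : j = m ∨ j = m + 1) :
    SolvesOn a k (fun t => μ j * v j t) 0 (Ioo (x m) (x (m + 1))) := by
  by_cases hj' : 1 ≤ j ∧ j ≤ N - 1
  · have h := (hveq j hj'.1 hj'.2).const_mul (μ j)
    rw [smul_zero] at h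
    refine h.mono ?_
    rcases hj with rfl | rfl
    · exact subset_union_right
    · refine subset_union_of_subset_left ?_ _
      push_cast
      simp
  · have hμj : μ j = 0 := by
      rcases hj with rfl | rfl
      · rwa [show j = 0 by omega]
      · rwa [show m + 1 = N by omega]
    have : (fun t => μ j * v j t) = 0 := by ext; simp [hμj]
    exact this ▸ solvesOn_zero a k _

theorem assemble_solvesOn_cell (hx : IsGrid N x)
    (hfj_sum : ∀ y ∈ Ioo (0 : ℝ) 1, ∑ j ∈ Finset.range (N + 1), fj j y = f y)
    (hfj_supp : ∀ j ≤ N, ∀ y : ℝ, y ∉ Ioo (x (j - 1)) (x (j + 1)) → fj j y = 0)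
    (husupp : ∀ j ≤ N, VanishesOff (u j) (x (j - 1)) (x (j + 1)))
    (hueq : ∀ j ≤ N, SolvesOn a k (u j) (fj j) (Ioo (x (j - 1)) (x (j + 1)) ∩ Ioo 0 1))
    (hvsupp : ∀ j : ℕ, 1 ≤ j → j ≤ N - 1 → VanishesOff (v j) (x (j - 1)) (x (j + 1)))
    (hveq : ∀ j : ℕ, 1 ≤ j → j ≤ N - 1 →
      SolvesOn a k (v j) 0 (Ioo (x (j - 1)) (x j) ∪ Ioo (x j) (x (j + 1))))
    (hμ0 : μ 0 = 0) (hμN : μ N = 0) {m : ℕ} (hm : m < N) :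
    SolvesOn a k (assemble N u v μ) f (Ioo (x m) (x (m + 1))) := by
  have hS : IsOpen (Ioo (x m) (x (m + 1))) := isOpen_Ioo
  have hsum := (((solvesOn_cell_of_local hx hueq hm (.inl rfl)).add hS
    (solvesOn_cell_of_local hx hueq hm (.inr rfl))).add hS
    (solvesOn_const_mul_cell_of_dirac hveq hμ0 hμN hm (.inl rfl))).add hS
    (solvesOn_const_mul_cell_of_dirac hveq hμ0 hμN hm (.inr rfl))
  refine hsum.congr hS (assemble_eqOn_cell hx husupp hvsupp hμ0 hμN hm).symm fun z hz => ?_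
  simp [partition_eqOn_cell hx hfj_sum hfj_supp hm hz]

theorem flux_assemble_eqOn_cell (hx : IsGrid N x)
    (husupp : ∀ j ≤ N, VanishesOff (u j) (x (j - 1)) (x (j + 1)))
    (hueq : ∀ j ≤ N, SolvesOn a k (u j) (fj j) (Ioo (x (j - 1)) (x (j + 1)) ∩ Ioo 0 1))
    (hvsupp : ∀ j : ℕ, 1 ≤ j → j ≤ N - 1 → VanishesOff (v j) (x (j - 1)) (x (j + 1)))
    (hveq : ∀ j : ℕ, 1 ≤ j → j ≤ N - 1 →
      SolvesOn a k (v j) 0 (Ioo (x (j - 1)) (x j) ∪ Ioo (x j) (x (j + 1))))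
    (hμ0 : μ 0 = 0) (hμN : μ N = 0) {m : ℕ} (hm : m < N) :
    EqOn (flux a (assemble N u v μ))
      (fun z => flux a (u m) z + flux a (u (m + 1)) z + μ m * flux a (v m) z
        + μ (m + 1) * flux a (v (m + 1)) z)
      (Ioo (x m) (x (m + 1))) := by
  have hS : IsOpen (Ioo (x m) (x (m + 1))) := isOpen_Ioo
  have h₁ := solvesOn_cell_of_local hx hueq hm (.inl rfl)
  have h₂ := solvesOn_cell_of_local hx hueq hm (.inr rfl)
  have h₃ := solvesOn_const_mul_cell_of_dirac hveq hμ0 hμN hm (.inl rfl)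
  have h₄ := solvesOn_const_mul_cell_of_dirac hveq hμ0 hμN hm (.inr rfl)
  intro z hz
  rw [flux_eqOn hS (assemble_eqOn_cell hx husupp hvsupp hμ0 hμN hm) hz,
    ((h₁.add hS h₂).add hS h₃).flux_add h₄ hz, Pi.add_apply, ((h₁.add hS h₂).flux_add h₃ hz),
    Pi.add_apply, h₁.flux_add h₂ hz, Pi.add_apply, flux_const_mul, flux_const_mul]

theorem continuousAt_flux_of_local (hx : IsGrid N x)
    (hueq : ∀ j ≤ N, SolvesOn a k (u j) (fj j) (Ioo (x (j - 1)) (x (j + 1)) ∩ Ioo 0 1))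
    {m : ℕ} (hm₁ : 1 ≤ m) (hm₂ : m ≤ N - 1) : ContinuousAt (flux a (u m)) (x m) :=
  (hueq m (by omega) (x m) ⟨⟨hx.strictMonoOn ⟨by omega, by omega⟩ ⟨by omega, by omega⟩ (by omega),
    hx.strictMonoOn ⟨by omega, by omega⟩ ⟨by omega, by omega⟩ (by omega)⟩,
    hx.mem_Ioo (by omega) (by omega)⟩).2.1.continuousAt

theorem tendsto_flux_assemble_nhdsLT (hx : IsGrid N x)
    (husupp : ∀ j ≤ N, VanishesOff (u j) (x (j - 1)) (x (j + 1)))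
    (hueq : ∀ j ≤ N, SolvesOn a k (u j) (fj j) (Ioo (x (j - 1)) (x (j + 1)) ∩ Ioo 0 1))
    (hvsupp : ∀ j : ℕ, 1 ≤ j → j ≤ N - 1 → VanishesOff (v j) (x (j - 1)) (x (j + 1)))
    (hveq : ∀ j : ℕ, 1 ≤ j → j ≤ N - 1 →
      SolvesOn a k (v j) 0 (Ioo (x (j - 1)) (x j) ∪ Ioo (x j) (x (j + 1))))
    (hμ0 : μ 0 = 0) (hμN : μ N = 0) {Lu Lv VL : ℕ → ℂ}
    (hLu : ∀ m : ℕ, 1 ≤ m → m ≤ N - 1 → Tendsto (flux a (u (m - 1))) (𝓝[<] x m) (𝓝 (Lu m)))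
    (hLv : ∀ j : ℕ, 1 ≤ j → j ≤ N - 1 → Tendsto (flux a (v j)) (𝓝[<] x j) (𝓝 (Lv j)))
    (hVL : ∀ m : ℕ, 2 ≤ m → m ≤ N - 1 → Tendsto (flux a (v (m - 1))) (𝓝[<] x m) (𝓝 (VL m)))
    {m : ℕ} (hm₁ : 1 ≤ m) (hm₂ : m ≤ N - 1) :
    Tendsto (flux a (assemble N u v μ)) (𝓝[<] x m)
      (𝓝 (Lu m + flux a (u m) (x m) + μ (m - 1) * VL m + μ m * Lv m)) := by
  have t₂ := (continuousAt_flux_of_local hx hueq hm₁ hm₂).tendsto.mono_left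
    (nhdsWithin_le_nhds (s := Iio (x m)))
  have t₄ := (hLv m hm₁ hm₂).const_mul (μ m)
  obtain ⟨n, rfl⟩ : ∃ n, m = n + 1 := ⟨m - 1, by omega⟩
  have hcell := eventuallyEq_of_mem (hx.cell_mem_nhdsLT (m := n) (by omega))
    (flux_assemble_eqOn_cell hx husupp hueq hvsupp hveq hμ0 hμN (by omega))
  simp only [Nat.add_sub_cancel] at hLu hVL ⊢
  have t₃ : Tendsto (fun z => μ n * flux a (v n) z) (𝓝[<] x ↑(n + 1)) (𝓝 (μ n * VL (n + 1))) := by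
    rcases n with _ | n
    · simp [hμ0]
    · exact (hVL (n + 1 + 1) (by omega) hm₂).const_mul _
  exact (((hLu (n + 1) hm₁ hm₂).add t₂).add t₃ |>.add t₄).congr' hcell.symm

theorem tendsto_flux_assemble_nhdsGT (hx : IsGrid N x)
    (husupp : ∀ j ≤ N, VanishesOff (u j) (x (j - 1)) (x (j + 1)))
    (hueq : ∀ j ≤ N, SolvesOn a k (u j) (fj j) (Ioo (x (j - 1)) (x (j + 1)) ∩ Ioo 0 1))
    (hvsupp : ∀ j : ℕ, 1 ≤ j → j ≤ N - 1 → VanishesOff (v j) (x (j - 1)) (x (j + 1)))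
    (hveq : ∀ j : ℕ, 1 ≤ j → j ≤ N - 1 →
      SolvesOn a k (v j) 0 (Ioo (x (j - 1)) (x j) ∪ Ioo (x j) (x (j + 1))))
    (hμ0 : μ 0 = 0) (hμN : μ N = 0) {Ru Rv VR : ℕ → ℂ}
    (hRu : ∀ m : ℕ, 1 ≤ m → m ≤ N - 1 → Tendsto (flux a (u (m + 1))) (𝓝[>] x m) (𝓝 (Ru m)))
    (hRv : ∀ j : ℕ, 1 ≤ j → j ≤ N - 1 → Tendsto (flux a (v j)) (𝓝[>] x j) (𝓝 (Rv j)))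
    (hVR : ∀ m : ℕ, 1 ≤ m → m + 1 ≤ N - 1 →
      Tendsto (flux a (v (m + 1))) (𝓝[>] x m) (𝓝 (VR m)))
    {m : ℕ} (hm₁ : 1 ≤ m) (hm₂ : m ≤ N - 1) :
    Tendsto (flux a (assemble N u v μ)) (𝓝[>] x m)
      (𝓝 (flux a (u m) (x m) + Ru m + μ m * Rv m + μ (m + 1) * VR m)) := by
  have t₁ := (continuousAt_flux_of_local hx hueq hm₁ hm₂).tendsto.mono_left
    (nhdsWithin_le_nhds (s := Ioi (x m)))
  have t₄ : Tendsto (fun z => μ (m + 1) * flux a (v (m + 1)) z) (𝓝[>] x m)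
      (𝓝 (μ (m + 1) * VR m)) := by
    by_cases hm : m + 1 ≤ N - 1
    · exact (hVR m hm₁ hm).const_mul _
    · simp [show m + 1 = N by omega, hμN]
  have hcell := eventuallyEq_of_mem (hx.cell_mem_nhdsGT (m := m) (by omega))
    (flux_assemble_eqOn_cell hx husupp hueq hvsupp hveq hμ0 hμN (by omega))
  exact ((t₁.add (hRu m hm₁ hm₂)).add ((hRv m hm₁ hm₂).const_mul (μ m)) |>.add t₄).congr'
    hcell.symm

end Assembly

theorem dirac_assisted_tree_assembles_global_solution_general
    (N₀ : ℕ) (x : ℤ → ℝ)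
    (hxm1 : x (-1) = 0) (hx0 : x 0 = 0) (hxN : x (N₀ : ℤ) = 1) (hxN1 : x ((N₀ : ℤ) + 1) = 1)
    (hmono : ∀ i : ℤ, 0 ≤ i → i < (N₀ : ℤ) → x i < x (i + 1))
    (a : ℝ → ℝ) (haC : ContinuousOn a (Set.Ioo 0 1))
    (hapos : ∀ y ∈ Set.Ioo (0 : ℝ) 1, 0 < a y)
    (k f : ℝ → ℂ) (hkC : ContinuousOn k (Set.Ioo 0 1)) (hfC : ContinuousOn f (Set.Ioo 0 1))
    (g₀ g₁ : ℂ)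
    (fj : ℕ → ℝ → ℂ)
    (hfj_sum : ∀ y ∈ Set.Ioo (0 : ℝ) 1, ∑ j ∈ Finset.range (N₀ + 1), fj j y = f y)
    (hfj_supp : ∀ j : ℕ, j ≤ N₀ →
      ∀ y : ℝ, y ∉ Set.Ioo (x ((j : ℤ) - 1)) (x ((j : ℤ) + 1)) → fj j y = 0)
    (u : ℕ → ℝ → ℂ)
    (huC : ∀ j : ℕ, j ≤ N₀ → ContinuousOn (u j) (Set.Icc 0 1))
    (husupp : ∀ j : ℕ, j ≤ N₀ → ∀ y ∈ Set.Icc (0 : ℝ) 1,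
      y ∉ Set.Icc (x ((j : ℤ) - 1)) (x ((j : ℤ) + 1)) → u j y = 0)
    (hu0 : u 0 0 = g₀) (huN : u N₀ 1 = g₁)
    (huL : ∀ j : ℕ, 1 ≤ j → j ≤ N₀ → u j (x ((j : ℤ) - 1)) = 0)
    (huR : ∀ j : ℕ, j ≤ N₀ - 1 → u j (x ((j : ℤ) + 1)) = 0)
    (hueq : ∀ j : ℕ, j ≤ N₀ →
      ∀ y ∈ Set.Ioo (x ((j : ℤ) - 1)) (x ((j : ℤ) + 1)) ∩ Set.Ioo (0 : ℝ) 1,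
        DifferentiableAt ℝ (u j) y ∧
        DifferentiableAt ℝ (fun z => (a z : ℂ) * deriv (u j) z) y ∧
        deriv (fun z => (a z : ℂ) * deriv (u j) z) y + k y * u j y = fj j y)
    (Lu Ru : ℕ → ℂ)
    (hLu : ∀ m : ℕ, 1 ≤ m → m ≤ N₀ - 1 →
      Tendsto (fun z => (a z : ℂ) * deriv (u (m - 1)) z) (𝓝[<] x (m : ℤ)) (𝓝 (Lu m)))
    (hRu : ∀ m : ℕ, 1 ≤ m → m ≤ N₀ - 1 →
      Tendsto (fun z => (a z : ℂ) * deriv (u (m + 1)) z) (𝓝[>] x (m : ℤ)) (𝓝 (Ru m)))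
    (v : ℕ → ℝ → ℂ)
    (hvC : ∀ j : ℕ, 1 ≤ j → j ≤ N₀ - 1 → ContinuousOn (v j) (Set.Icc 0 1))
    (hvsupp : ∀ j : ℕ, 1 ≤ j → j ≤ N₀ - 1 → ∀ y ∈ Set.Icc (0 : ℝ) 1,
      y ∉ Set.Icc (x ((j : ℤ) - 1)) (x ((j : ℤ) + 1)) → v j y = 0)
    (hvbc : ∀ j : ℕ, 1 ≤ j → j ≤ N₀ - 1 →
      v j (x ((j : ℤ) - 1)) = 0 ∧ v j (x ((j : ℤ) + 1)) = 0)
    (hveq : ∀ j : ℕ, 1 ≤ j → j ≤ N₀ - 1 →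
      ∀ y ∈ Set.Ioo (x ((j : ℤ) - 1)) (x (j : ℤ)) ∪ Set.Ioo (x (j : ℤ)) (x ((j : ℤ) + 1)),
        DifferentiableAt ℝ (v j) y ∧
        DifferentiableAt ℝ (fun z => (a z : ℂ) * deriv (v j) z) y ∧
        deriv (fun z => (a z : ℂ) * deriv (v j) z) y + k y * v j y = 0)
    (Lv Rv : ℕ → ℂ)
    (hLv : ∀ j : ℕ, 1 ≤ j → j ≤ N₀ - 1 →
      Tendsto (fun z => (a z : ℂ) * deriv (v j) z) (𝓝[<] x (j : ℤ)) (𝓝 (Lv j)))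
    (hRv : ∀ j : ℕ, 1 ≤ j → j ≤ N₀ - 1 →
      Tendsto (fun z => (a z : ℂ) * deriv (v j) z) (𝓝[>] x (j : ℤ)) (𝓝 (Rv j)))
    (hjump : ∀ j : ℕ, 1 ≤ j → j ≤ N₀ - 1 → Rv j - Lv j = 1)
    (μ : ℕ → ℂ) (hμ0 : μ 0 = 0) (hμN : μ N₀ = 0)
    (VL VR : ℕ → ℂ)
    (hVR : ∀ m : ℕ, 1 ≤ m → m + 1 ≤ N₀ - 1 →
      Tendsto (fun z => (a z : ℂ) * deriv (v (m + 1)) z) (𝓝[>] x (m : ℤ)) (𝓝 (VR m)))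
    (hVL : ∀ m : ℕ, 2 ≤ m → m ≤ N₀ - 1 →
      Tendsto (fun z => (a z : ℂ) * deriv (v (m - 1)) z) (𝓝[<] x (m : ℤ)) (𝓝 (VL m)))
    (hlink : ∀ m : ℕ, 1 ≤ m → m ≤ N₀ - 1 →
      μ m + μ (m + 1) * VR m - μ (m - 1) * VL m + Ru m - Lu m = 0) :
    ∀ U : ℝ → ℂ,
      (U = fun y => ∑ j ∈ Finset.range (N₀ + 1), u j y
          + ∑ j ∈ Finset.Icc 1 (N₀ - 1), μ j * v j y) →
      ContinuousOn U (Set.Icc 0 1) ∧ U 0 = g₀ ∧ U 1 = g₁ ∧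
      (∀ y ∈ Set.Ioo (0 : ℝ) 1, DifferentiableAt ℝ U y) ∧
      (∀ y ∈ Set.Ioo (0 : ℝ) 1,
        DifferentiableAt ℝ (fun z => (a z : ℂ) * deriv U z) y) ∧
      (∀ y ∈ Set.Ioo (0 : ℝ) 1,
        deriv (fun z => (a z : ℂ) * deriv U z) y + k y * U y = f y) := by
  intro U hU
  obtain rfl : U = assemble N₀ u v μ := hU
  have hx : IsGrid N₀ x := ⟨hxm1, hx0, hxN, hxN1, hmono⟩
  have hUc := continuousOn_assemble (μ := μ) huC hvC
  have hcell : ∀ m < N₀, SolvesOn a k (assemble N₀ u v μ) f (Ioo (x m) (x (m + 1))) :=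
    fun m hm => assemble_solvesOn_cell hx hfj_sum hfj_supp husupp hueq hvsupp hveq hμ0 hμN hm
  have hnode : ∀ m : ℕ, 1 ≤ m → m ≤ N₀ - 1 → SolvesAt a k (assemble N₀ u v μ) f (x m) := by
    intro m hm₁ hm₂
    have hp : Ioo (0 : ℝ) 1 ∈ 𝓝 (x m) := isOpen_Ioo.mem_nhds (hx.mem_Ioo (by omega) (by omega))
    refine SolvesAt.of_tendsto_flux (hx.eventually_nhdsLT_of_cells hcell hm₁ (by omega))
      (hx.eventually_nhdsGT_of_cells hcell (by omega))
      (tendsto_flux_assemble_nhdsLT hx husupp hueq hvsupp hveq hμ0 hμN hLu hLv hVL hm₁ hm₂) ?_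
      (hUc.continuousAt (mem_of_superset hp Ioo_subset_Icc_self)) (haC.continuousAt hp)
      (hapos _ (mem_of_mem_nhds hp)).ne' (hkC.continuousAt hp) (hfC.continuousAt hp)
    convert tendsto_flux_assemble_nhdsGT hx husupp hueq hvsupp hveq hμ0 hμN hRu hRv hVR hm₁ hm₂
      using 2
    linear_combination -hlink m hm₁ hm₂ - μ m * hjump m hm₁ hm₂
  have hsol : SolvesOn a k (assemble N₀ u v μ) f (Ioo 0 1) := fun y hy => by
    rcases hx.eq_node_or_mem_cell hy with ⟨m, hm₁, hm₂, rfl⟩ | ⟨m, hm, hym⟩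
    exacts [hnode m hm₁ hm₂, hcell m hm y hym]
  exact ⟨hUc, (assemble_zero hx husupp huL hvsupp fun j h₁ h₂ => (hvbc j h₁ h₂).1).trans hu0,
    (assemble_one hx husupp huR hvsupp fun j h₁ h₂ => (hvbc j h₁ h₂).2).trans huN,
    fun y hy => (hsol y hy).1, fun y hy => (hsol y hy).2.1, fun y hy => (hsol y hy).2.2⟩

/-- Theorem 2.2 of the paper, the main Dirac Assisted Tree theorem, in
classical pointwise form, for Dirichlet boundary conditions `u(0) = g₀`, `u(1) = g₁`.
The grid is `0 = x_0 < x_1 < ⋯ < x_{N₀} = 1` with the conventions `x_{−1} = 0`,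
`x_{N₀+1} = 1`; the `u_j` are the local solutions of `(a u_j')' + k u_j = f_j`, the `v_j`
are the Dirac-assisted local solutions (unit jump of the flux `a·v_j'` across `x_j`), and
the linking equations determine the coefficients `μ_j`.  Then
`u = ∑_j u_j + ∑_j μ_j v_j` solves `(a u')' + k u = f` on `(0, 1)` with `u(0) = g₀`,
`u(1) = g₁`. -/
theorem dirac_assisted_tree_assembles_global_solution
    (N₀ : ℕ) (hN₀ : 2 ≤ N₀) (x : ℤ → ℝ)
    (hxm1 : x (-1) = 0) (hx0 : x 0 = 0) (hxN : x (N₀ : ℤ) = 1) (hxN1 : x ((N₀ : ℤ) + 1) = 1)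
    (hmono : ∀ i : ℤ, 0 ≤ i → i < (N₀ : ℤ) → x i < x (i + 1))
    (a : ℝ → ℝ) (haC : ContinuousOn a (Set.Ioo 0 1))
    (hapos : ∀ y ∈ Set.Ioo (0 : ℝ) 1, 0 < a y)
    (k f : ℝ → ℂ) (hkC : ContinuousOn k (Set.Ioo 0 1)) (hfC : ContinuousOn f (Set.Ioo 0 1))
    (g₀ g₁ : ℂ)
    (fj : ℕ → ℝ → ℂ)
    (hfj_sum : ∀ y ∈ Set.Ioo (0 : ℝ) 1, ∑ j ∈ Finset.range (N₀ + 1), fj j y = f y)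
    (hfj_supp : ∀ j : ℕ, j ≤ N₀ →
      ∀ y : ℝ, y ∉ Set.Ioo (x ((j : ℤ) - 1)) (x ((j : ℤ) + 1)) → fj j y = 0)
    (u : ℕ → ℝ → ℂ)
    (huC : ∀ j : ℕ, j ≤ N₀ → ContinuousOn (u j) (Set.Icc 0 1))
    (husupp : ∀ j : ℕ, j ≤ N₀ → ∀ y ∈ Set.Icc (0 : ℝ) 1,
      y ∉ Set.Icc (x ((j : ℤ) - 1)) (x ((j : ℤ) + 1)) → u j y = 0)
    (hu0 : u 0 0 = g₀) (huN : u N₀ 1 = g₁)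
    (huL : ∀ j : ℕ, 1 ≤ j → j ≤ N₀ → u j (x ((j : ℤ) - 1)) = 0)
    (huR : ∀ j : ℕ, j ≤ N₀ - 1 → u j (x ((j : ℤ) + 1)) = 0)
    (hueq : ∀ j : ℕ, j ≤ N₀ →
      ∀ y ∈ Set.Ioo (x ((j : ℤ) - 1)) (x ((j : ℤ) + 1)) ∩ Set.Ioo (0 : ℝ) 1,
        DifferentiableAt ℝ (u j) y ∧
        DifferentiableAt ℝ (fun z => (a z : ℂ) * deriv (u j) z) y ∧
        deriv (fun z => (a z : ℂ) * deriv (u j) z) y + k y * u j y = fj j y)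
    (Lu Ru : ℕ → ℂ)
    (hLu : ∀ m : ℕ, 1 ≤ m → m ≤ N₀ - 1 →
      Tendsto (fun z => (a z : ℂ) * deriv (u (m - 1)) z) (𝓝[<] x (m : ℤ)) (𝓝 (Lu m)))
    (hRu : ∀ m : ℕ, 1 ≤ m → m ≤ N₀ - 1 →
      Tendsto (fun z => (a z : ℂ) * deriv (u (m + 1)) z) (𝓝[>] x (m : ℤ)) (𝓝 (Ru m)))
    (v : ℕ → ℝ → ℂ)
    (hvC : ∀ j : ℕ, 1 ≤ j → j ≤ N₀ - 1 → ContinuousOn (v j) (Set.Icc 0 1))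
    (hvsupp : ∀ j : ℕ, 1 ≤ j → j ≤ N₀ - 1 → ∀ y ∈ Set.Icc (0 : ℝ) 1,
      y ∉ Set.Icc (x ((j : ℤ) - 1)) (x ((j : ℤ) + 1)) → v j y = 0)
    (hvbc : ∀ j : ℕ, 1 ≤ j → j ≤ N₀ - 1 →
      v j (x ((j : ℤ) - 1)) = 0 ∧ v j (x ((j : ℤ) + 1)) = 0)
    (hveq : ∀ j : ℕ, 1 ≤ j → j ≤ N₀ - 1 →
      ∀ y ∈ Set.Ioo (x ((j : ℤ) - 1)) (x (j : ℤ)) ∪ Set.Ioo (x (j : ℤ)) (x ((j : ℤ) + 1)),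
        DifferentiableAt ℝ (v j) y ∧
        DifferentiableAt ℝ (fun z => (a z : ℂ) * deriv (v j) z) y ∧
        deriv (fun z => (a z : ℂ) * deriv (v j) z) y + k y * v j y = 0)
    (Lv Rv : ℕ → ℂ)
    (hLv : ∀ j : ℕ, 1 ≤ j → j ≤ N₀ - 1 →
      Tendsto (fun z => (a z : ℂ) * deriv (v j) z) (𝓝[<] x (j : ℤ)) (𝓝 (Lv j)))
    (hRv : ∀ j : ℕ, 1 ≤ j → j ≤ N₀ - 1 →
      Tendsto (fun z => (a z : ℂ) * deriv (v j) z) (𝓝[>] x (j : ℤ)) (𝓝 (Rv j)))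
    (hjump : ∀ j : ℕ, 1 ≤ j → j ≤ N₀ - 1 → Rv j - Lv j = 1)
    (hv_endL : ∀ j : ℕ, 1 ≤ j → j ≤ N₀ - 1 →
      ∃ c : ℂ, Tendsto (fun z => (a z : ℂ) * deriv (v j) z) (𝓝[>] x ((j : ℤ) - 1)) (𝓝 c))
    (hv_endR : ∀ j : ℕ, 1 ≤ j → j ≤ N₀ - 1 →
      ∃ c : ℂ, Tendsto (fun z => (a z : ℂ) * deriv (v j) z) (𝓝[<] x ((j : ℤ) + 1)) (𝓝 c))
    (μ : ℕ → ℂ) (hμ0 : μ 0 = 0) (hμN : μ N₀ = 0)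
    (VL VR : ℕ → ℂ)
    (hVR : ∀ m : ℕ, 1 ≤ m → m + 1 ≤ N₀ - 1 →
      Tendsto (fun z => (a z : ℂ) * deriv (v (m + 1)) z) (𝓝[>] x (m : ℤ)) (𝓝 (VR m)))
    (hVL : ∀ m : ℕ, 2 ≤ m → m ≤ N₀ - 1 →
      Tendsto (fun z => (a z : ℂ) * deriv (v (m - 1)) z) (𝓝[<] x (m : ℤ)) (𝓝 (VL m)))
    (hlink : ∀ m : ℕ, 1 ≤ m → m ≤ N₀ - 1 →
      μ m + μ (m + 1) * VR m - μ (m - 1) * VL m + Ru m - Lu m = 0) :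
    ∀ U : ℝ → ℂ,
      (U = fun y => ∑ j ∈ Finset.range (N₀ + 1), u j y
          + ∑ j ∈ Finset.Icc 1 (N₀ - 1), μ j * v j y) →
      ContinuousOn U (Set.Icc 0 1) ∧ U 0 = g₀ ∧ U 1 = g₁ ∧
      (∀ y ∈ Set.Ioo (0 : ℝ) 1, DifferentiableAt ℝ U y) ∧
      (∀ y ∈ Set.Ioo (0 : ℝ) 1,
        DifferentiableAt ℝ (fun z => (a z : ℂ) * deriv U z) y) ∧
      (∀ y ∈ Set.Ioo (0 : ℝ) 1,
        deriv (fun z => (a z : ℂ) * deriv U z) y + k y * U y = f y) :=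
  dirac_assisted_tree_assembles_global_solution_general N₀ x hxm1 hx0 hxN hxN1 hmono a haC hapos k f
    hkC hfC g₀ g₁ fj hfj_sum hfj_supp u huC husupp hu0 huN huL huR hueq Lu Ru hLu hRu v hvC hvsupp
    hvbc hveq Lv Rv hLv hRv hjump μ hμ0 hμN VL VR hVR hVL hlink
end

section
/- Let x_b ∈ I and let M ≥ 2 be an even integer. Let p be the unique polynomial of degree at most M−1 such that p(h)·𝔈_1(h) − 1 = O(h^M) as h → 0 (the degree-(M−1) truncation of the formal power series inverse of 𝔈_1). Define the stencil coefficients c_1(h) := −p(h), c_{−1}(h) := −p(−h), c_0(h) := p(h)·𝔈_0(h) + p(−h)·𝔈_0(−h), and, for 0 ≤ ℓ ≤ M−2, d_ℓ(h) := −δ_{ℓ,0} − p(h)·𝔉_ℓ(h) − (−1)^ℓ·p(−h)·𝔉_ℓ(−h), where δ_{ℓ,0} = 1 if ℓ = 0 and 0 otherwise. Then for every infinitely differentiable u : I → ℂ satisfying (a u')' + k u = f on I, one has, as h → 0: c_{−1}(h)·u(x_b−h) + c_0(h)·u(x_b) + c_1(h)·u(x_b+h) − h²·Σ_{ℓ=0}^{M−2}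 d_ℓ(h)·h^ℓ·f^{(ℓ)}(x_b) − h²·f(x_b) = O(h^{M+2}); that is, this compact finite difference scheme has accuracy order M (and numerical dispersion order M) at the base point x_b. -/
open Filter Topology Asymptotics

/-- `Ecoef a k n = (E_{n+2,0}, E_{n+2,1})` from the recursion of the paper. -/
noncomputable def Ecoef (a : ℝ → ℝ) (k : ℝ → ℂ) : ℕ → (ℝ → ℂ) × (ℝ → ℂ)
  | 0 => (fun x => -k x / (a x : ℂ), fun x => -((deriv a x : ℝ) : ℂ) / (a x : ℂ))
  | n + 1 =>
      (fun x => deriv (Ecoef a k n).1 x - k x / (a x : ℂ) * (Ecoef a k n).2 x,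
       fun x => (Ecoef a k n).1 x + deriv (Ecoef a k n).2 x
          - ((deriv a x : ℝ) : ℂ) / (a x : ℂ) * (Ecoef a k n).2 x)

/-- `E_{j,0}` for `j ≥ 2` (junk value for `j < 2`). -/
noncomputable def Ej0 (a : ℝ → ℝ) (k : ℝ → ℂ) (j : ℕ) : ℝ → ℂ := (Ecoef a k (j - 2)).1

/-- `E_{j,1}` for `j ≥ 2` (junk value for `j < 2`). -/
noncomputable def Ej1 (a : ℝ → ℝ) (k : ℝ → ℂ) (j : ℕ) : ℝ → ℂ := (Ecoef a k (j - 2)).2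

/-- `Fcoef a k n m = F_{n+2, m-1}` (second index shifted by one: `m = ℓ + 1`, `ℓ ≥ -1`). -/
noncomputable def Fcoef (a : ℝ → ℝ) (k : ℝ → ℂ) : ℕ → ℕ → ℝ → ℂ
  | 0, 0 => fun x => (Ecoef a k 0).2 x / (a x : ℂ)
  | 0, 1 => fun x => 1 / (a x : ℂ)
  | 0, _ + 2 => fun _ => 0
  | n + 1, 0 => fun x => (Ecoef a k (n + 1)).2 x / (a x : ℂ)
  | n + 1, m + 1 => fun x => deriv (Fcoef a k n (m + 1)) x + Fcoef a k n m x

/-- `F_{j,ℓ}` for `j ≥ 2`, `ℓ ≥ 0` (junk value for `j < 2`). -/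
noncomputable def Fjl (a : ℝ → ℝ) (k : ℝ → ℂ) (j ℓ : ℕ) : ℝ → ℂ := Fcoef a k (j - 2) (ℓ + 1)

/-- `𝔈₀(h) = 1 + ∑_{j=2}^{B} E_{j,0}(x_b) h^j / j!`. -/
noncomputable def EPoly0 (a : ℝ → ℝ) (k : ℝ → ℂ) (xb : ℝ) (B : ℕ) (h : ℝ) : ℂ :=
  1 + ∑ j ∈ Finset.Icc 2 B, Ej0 a k j xb * (h : ℂ) ^ j / (Nat.factorial j : ℂ)

/-- `𝔈₁(h) = 1 + ∑_{j=2}^{B} E_{j,1}(x_b) h^(j-1) / j!`. -/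
noncomputable def EPoly1 (a : ℝ → ℝ) (k : ℝ → ℂ) (xb : ℝ) (B : ℕ) (h : ℝ) : ℂ :=
  1 + ∑ j ∈ Finset.Icc 2 B, Ej1 a k j xb * (h : ℂ) ^ (j - 1) / (Nat.factorial j : ℂ)

/-- `𝔉_ℓ(h) = ∑_{j=ℓ+2}^{B} F_{j,ℓ}(x_b) h^(j-ℓ-2) / j!`. -/
noncomputable def FPoly (a : ℝ → ℝ) (k : ℝ → ℂ) (xb : ℝ) (ℓ B : ℕ) (h : ℝ) : ℂ :=
  ∑ j ∈ Finset.Icc (ℓ + 2) B, Fjl a k j ℓ xb * (h : ℂ) ^ (j - ℓ - 2) / (Nat.factorial j : ℂ)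

/-!
Differentiating `(a u')' + k u = f` expresses every derivative `u⁽ʲ⁾(x_b)`, `j ≥ 2`, through
`u(x_b)`, `u'(x_b)` and the `f⁽ˡ⁾(x_b)`, with coefficients `E_{j,0}`, `E_{j,1}`, `F_{j,ℓ}`.
Inserted into Taylor's formula this gives, with `c = u⁽ᴹ⁺¹⁾(x_b) / (M+1)!`,
`w(h) := u(x_b+h) - 𝔈₀(h) u - h² ∑ hˡ 𝔉_ℓ(h) f⁽ˡ⁾ = h 𝔈₁(h) u' + c h^{M+1} + O(h^{M+2})`.
The truncation error is `-(p(h) w(h) + p(-h) w(-h))`, and this even combination equals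
`u' h (q(h) - q(-h)) + c h^{M+1} (p(h) - p(-h)) + O(h^{M+2})` with `q = p 𝔈₁ - 1 = O(h^M)`.
As `M` is even, `q` is divisible by `h^M` and its odd part by `h^{M+1}`.
-/

open Finset Polynomial
open scoped Nat ContDiff

theorem taylor_isBigO_of_isOpen {E : Type*} [NormedAddCommGroup E] [NormedSpace ℝ E]
    {g : ℝ → E} {s : Set ℝ} {x : ℝ} {n : ℕ} (hs : IsOpen s) (hx : x ∈ s)
    (hg : ContDiffOn ℝ n g s) :
    (fun h : ℝ => g (x + h) - ∑ j ∈ range n, ((j ! : ℝ)⁻¹ * h ^ j) • iteratedDeriv j g x)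
      =O[𝓝 0] fun h => h ^ n := by
  obtain ⟨r, hr, hball⟩ := Metric.isOpen_iff.1 hs x hx
  have hxr : x ∈ Metric.ball x r := Metric.mem_ball_self hr
  have htaylor := taylor_isLittleO (convex_ball x r) hxr (hg.mono hball)
  rw [Metric.isOpen_ball.nhdsWithin_eq hxr] at htaylor
  have hshift : Tendsto (fun h : ℝ => x + h) (𝓝 0) (𝓝 x) := by
    simpa using (continuous_const_add x).tendsto 0
  have hrem : (fun h : ℝ => g (x + h) - taylorWithinEval g n (Metric.ball x r) x (x + h))
      =O[𝓝 0] fun h => h ^ n :=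
    (htaylor.comp_tendsto hshift).isBigO.congr_right fun h => by simp
  have hlast : (fun h : ℝ => ((n ! : ℝ)⁻¹ * h ^ n) • iteratedDeriv n g x) =O[𝓝 0] fun h => h ^ n :=
    isBigO_of_le' (c := ‖(n ! : ℝ)⁻¹‖ * ‖iteratedDeriv n g x‖) _ fun h => by
      rw [norm_smul, norm_mul]; linarith
  refine (hrem.add hlast).congr_left fun h => ?_
  simp only [taylor_within_apply, sum_range_succ, add_sub_cancel_left]
  rw [sum_congr rfl fun j _ => by rw [iteratedDerivWithin_of_isOpen Metric.isOpen_ball hxr],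
    iteratedDerivWithin_of_isOpen Metric.isOpen_ball hxr]
  abel

theorem X_pow_dvd_of_isBigO {Q : ℂ[X]} {n : ℕ}
    (hQ : (fun t : ℝ => Q.eval (t : ℂ)) =O[𝓝[≠] 0] fun t => t ^ n) : X ^ n ∣ Q := by
  induction n generalizing Q with
  | zero => simp
  | succ n ih =>
    have hcont : Tendsto (fun t : ℝ => Q.eval (t : ℂ)) (𝓝[≠] 0) (𝓝 (Q.eval ((0 : ℝ) : ℂ))) :=
      ((Q.continuous.comp Complex.continuous_ofReal).tendsto 0).mono_left nhdsWithin_le_nhds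
    have hzero : Tendsto (fun t : ℝ => Q.eval (t : ℂ)) (𝓝[≠] 0) (𝓝 0) :=
      hQ.trans_tendsto <| by
        simpa using ((continuous_pow (n + 1)).tendsto (0 : ℝ)).mono_left nhdsWithin_le_nhds
    obtain ⟨S, rfl⟩ : X ∣ Q := by
      rw [X_dvd_iff, coeff_zero_eq_eval_zero]
      simpa using tendsto_nhds_unique hcont hzero
    have hinv : (fun t : ℝ => (t : ℂ)⁻¹) =O[𝓝[≠] 0] fun t => t⁻¹ :=
      isBigO_of_le _ fun t => by simp
    have hS : (fun t : ℝ => S.eval (t : ℂ)) =O[𝓝[≠] 0] fun t => t ^ n := by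
      refine (hinv.mul hQ).congr' ?_ ?_ <;>
        filter_upwards [self_mem_nhdsWithin] with t (ht : t ≠ 0)
      · simp [ht]
      · simp [pow_succ', ht]
    rw [pow_succ']
    exact mul_dvd_mul_left X (ih hS)

theorem eval_sub_eval_neg_isBigO_id (S : ℂ[X]) :
    (fun h : ℝ => S.eval (h : ℂ) - S.eval (-(h : ℂ))) =O[𝓝 0] fun h => h := by
  have hdiff : Differentiable ℂ fun z : ℂ => S.eval z - S.eval (-z) :=
    S.differentiable.sub (S.differentiable.comp differentiable_neg)
  have hO : (fun z : ℂ => S.eval z - S.eval (-z)) =O[𝓝 0] fun z => z := by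
    simpa using (hdiff 0).isBigO_sub
  exact (hO.comp_tendsto (Complex.continuous_ofReal.tendsto' 0 0 Complex.ofReal_zero)).trans
    (isBigO_of_le _ fun h => by simp)

theorem eval_sub_eval_neg_isBigO {Q : ℂ[X]} {n : ℕ} (hn : Even n) (hQ : X ^ n ∣ Q) :
    (fun h : ℝ => Q.eval (h : ℂ) - Q.eval (-(h : ℂ))) =O[𝓝 0] fun h => h ^ (n + 1) := by
  obtain ⟨S, rfl⟩ := hQ
  have hpow : (fun h : ℝ => (h : ℂ) ^ n) =O[𝓝 0] fun h => h ^ n := isBigO_of_le _ fun h => by simp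
  refine (hpow.mul (eval_sub_eval_neg_isBigO_id S)).congr (fun h => ?_) fun h => pow_succ h n
  simp [hn.neg_pow, mul_sub]

theorem eval_mul_add_eval_neg_mul_isBigO {P E : ℂ[X]} {M : ℕ} (hM : Even M)
    (hPE : X ^ M ∣ P * E - 1) {w : ℝ → ℂ} {α β : ℂ}
    (hw : (fun h : ℝ => w h - ((h : ℂ) * E.eval (h : ℂ) * α + (h : ℂ) ^ (M + 1) * β))
      =O[𝓝 0] fun h => h ^ (M + 2)) :
    (fun h : ℝ => P.eval (h : ℂ) * w h + P.eval (-(h : ℂ)) * w (-h))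
      =O[𝓝 0] fun h => h ^ (M + 2) := by
  set R := fun h : ℝ => w h - ((h : ℂ) * E.eval (h : ℂ) * α + (h : ℂ) ^ (M + 1) * β)
  have hid : (fun h : ℝ => (h : ℂ)) =O[𝓝 0] fun h => h := isBigO_of_le _ fun h => by simp
  have hpow : (fun h : ℝ => (h : ℂ) ^ (M + 1)) =O[𝓝 0] fun h => h ^ (M + 1) :=
    isBigO_of_le _ fun h => by simp
  have hoddQ : (fun h : ℝ => (h : ℂ) * ((P * E - 1).eval (h : ℂ) - (P * E - 1).eval (-(h : ℂ))))
      =O[𝓝 0] fun h => h ^ (M + 2) :=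
    (hid.mul (eval_sub_eval_neg_isBigO hM hPE)).congr_right fun h => by ring
  have hoddP : (fun h : ℝ => (h : ℂ) ^ (M + 1) * (P.eval (h : ℂ) - P.eval (-(h : ℂ))))
      =O[𝓝 0] fun h => h ^ (M + 2) :=
    (hpow.mul (eval_sub_eval_neg_isBigO (n := 0) .zero (by simp))).congr_right fun h => by ring
  have hPR : (fun h : ℝ => P.eval (h : ℂ) * R h) =O[𝓝 0] fun h => h ^ (M + 2) :=
    ((((P.continuous.comp Complex.continuous_ofReal).tendsto 0).isBigO_one ℝ).mul hw).congr_right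
      fun h => one_mul _
  have hPRneg : (fun h : ℝ => P.eval (-(h : ℂ)) * R (-h)) =O[𝓝 0] fun h => h ^ (M + 2) :=
    ((hPR.comp_tendsto (continuous_neg.tendsto' 0 0 neg_zero)).trans
      (isBigO_of_le _ fun h => by simp)).congr_left fun h => by simp
  refine (((hoddQ.const_mul_left α).add (hoddP.const_mul_left β)).add
    (hPR.add hPRneg)).congr_left fun h => ?_
  simp only [R, eval_sub, eval_mul, eval_one, Complex.ofReal_neg, (hM.add_one).neg_pow]
  ring

theorem ContDiffOn.iteratedDeriv_of_isOpen {𝕜 F : Type*} [NontriviallyNormedField 𝕜]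
    [NormedAddCommGroup F] [NormedSpace 𝕜 F] {g : 𝕜 → F} {s : Set 𝕜} (hs : IsOpen s)
    (hg : ContDiffOn 𝕜 ∞ g s) (m : ℕ) : ContDiffOn 𝕜 ∞ (iteratedDeriv m g) s := by
  induction m with
  | zero => simpa
  | succ m ih => simpa [iteratedDeriv_succ] using ih.deriv_of_isOpen hs le_rfl

section SolutionDerivatives

variable {s : Set ℝ} {a : ℝ → ℝ} {k : ℝ → ℂ}

theorem contDiffOn_Ecoef (hs : IsOpen s) (ha : ContDiffOn ℝ ∞ a s) (hk : ContDiffOn ℝ ∞ k s)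
    (ha0 : ∀ x ∈ s, a x ≠ 0) (n : ℕ) :
    ContDiffOn ℝ ∞ (Ecoef a k n).1 s ∧ ContDiffOn ℝ ∞ (Ecoef a k n).2 s := by
  have hac : ContDiffOn ℝ ∞ (fun x => (a x : ℂ)) s := Complex.ofRealCLM.contDiff.comp_contDiffOn ha
  have hda : ContDiffOn ℝ ∞ (fun x => ((deriv a x : ℝ) : ℂ)) s :=
    Complex.ofRealCLM.contDiff.comp_contDiffOn (ha.deriv_of_isOpen hs le_rfl)
  have hinv : ContDiffOn ℝ ∞ (fun x => (a x : ℂ)⁻¹) s :=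
    hac.inv fun x hx => Complex.ofReal_ne_zero.2 (ha0 x hx)
  induction n with
  | zero =>
    simp only [Ecoef, div_eq_mul_inv]
    exact ⟨hk.neg.mul hinv, hda.neg.mul hinv⟩
  | succ n ih =>
    simp only [Ecoef, div_eq_mul_inv]
    exact ⟨(ih.1.deriv_of_isOpen hs le_rfl).sub ((hk.mul hinv).mul ih.2),
      (ih.1.add (ih.2.deriv_of_isOpen hs le_rfl)).sub ((hda.mul hinv).mul ih.2)⟩

theorem contDiffOn_Fcoef (hs : IsOpen s) (ha : ContDiffOn ℝ ∞ a s) (hk : ContDiffOn ℝ ∞ k s)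
    (ha0 : ∀ x ∈ s, a x ≠ 0) (n m : ℕ) : ContDiffOn ℝ ∞ (Fcoef a k n m) s := by
  have hinv : ContDiffOn ℝ ∞ (fun x => (a x : ℂ)⁻¹) s :=
    (Complex.ofRealCLM.contDiff.comp_contDiffOn ha).inv fun x hx =>
      Complex.ofReal_ne_zero.2 (ha0 x hx)
  induction n generalizing m with
  | zero =>
    match m with
    | 0 => simpa [Fcoef, div_eq_mul_inv] using (contDiffOn_Ecoef hs ha hk ha0 0).2.mul hinv
    | 1 => simpa [Fcoef] using hinv
    | _ + 2 => exact contDiffOn_const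
  | succ n ih =>
    match m with
    | 0 => simpa [Fcoef, div_eq_mul_inv] using (contDiffOn_Ecoef hs ha hk ha0 (n + 1)).2.mul hinv
    | m + 1 => exact ((ih (m + 1)).deriv_of_isOpen hs le_rfl).add (ih m)

theorem Fcoef_eq_zero_of_le {n m : ℕ} (h : n + 2 ≤ m) : Fcoef a k n m = 0 := by
  induction n generalizing m with
  | zero => obtain ⟨m, rfl⟩ : ∃ m', m = m' + 2 := ⟨m - 2, by omega⟩; rfl
  | succ n ih =>
    obtain ⟨m, rfl⟩ : ∃ m', m = m' + 1 := ⟨m - 1, by omega⟩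
    simp only [Fcoef, ih (m := m + 1) (by omega), ih (m := m) (by omega)]
    ext
    simp

theorem Fcoef_zero (n : ℕ) : Fcoef a k n 0 = fun x => (Ecoef a k n).2 x / (a x : ℂ) := by
  cases n <;> rfl

theorem deriv_deriv_eq_of_solution {f u : ℝ → ℂ} (hs : IsOpen s) (ha : ContDiffOn ℝ ∞ a s)
    (ha0 : ∀ x ∈ s, a x ≠ 0) (hu : ContDiffOn ℝ ∞ u s)
    (hode : ∀ x ∈ s, deriv (fun y => (a y : ℂ) * deriv u y) x + k x * u x = f x)
    {x : ℝ} (hx : x ∈ s) :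
    deriv (deriv u) x = -k x / a x * u x + -((deriv a x : ℝ) : ℂ) / a x * deriv u x
      + 1 / a x * f x := by
  have hda : HasDerivAt a (deriv a x) x :=
    ((ha.differentiableOn (by simp)).differentiableAt (hs.mem_nhds hx)).hasDerivAt
  have hdu : HasDerivAt (deriv u) (deriv (deriv u) x) x :=
    (((hu.deriv_of_isOpen (m := ∞) hs le_rfl).differentiableOn (by simp)).differentiableAt
      (hs.mem_nhds hx)).hasDerivAt
  have hprod := hda.ofReal_comp.fun_mul hdu
  rw [← hode x hx, hprod.deriv]
  field_simp [Complex.ofReal_ne_zero.2 (ha0 x hx)]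
  ring

theorem iteratedDeriv_add_two_eqOn {f u : ℝ → ℂ} (hs : IsOpen s) (ha : ContDiffOn ℝ ∞ a s)
    (hk : ContDiffOn ℝ ∞ k s) (hf : ContDiffOn ℝ ∞ f s) (ha0 : ∀ x ∈ s, a x ≠ 0)
    (hu : ContDiffOn ℝ ∞ u s)
    (hode : ∀ x ∈ s, deriv (fun y => (a y : ℂ) * deriv u y) x + k x * u x = f x) (n : ℕ) :
    Set.EqOn (iteratedDeriv (n + 2) u)
      (fun x => (Ecoef a k n).1 x * u x + (Ecoef a k n).2 x * deriv u x
        + ∑ m ∈ range (n + 1), Fcoef a k n (m + 1) x * iteratedDeriv m f x) s := by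
  induction n with
  | zero =>
    intro x hx
    rw [iteratedDeriv_succ, iteratedDeriv_one, deriv_deriv_eq_of_solution hs ha ha0 hu hode hx]
    simp [Ecoef, Fcoef]
  | succ n ih =>
    intro x hx
    have hasDeriv : ∀ {g : ℝ → ℂ}, ContDiffOn ℝ ∞ g s → HasDerivAt g (deriv g x) x :=
      fun hg => ((hg.differentiableOn (by simp)).differentiableAt (hs.mem_nhds hx)).hasDerivAt
    have hE := contDiffOn_Ecoef hs ha hk ha0 n
    have hsum : HasDerivAt
        (fun y => ∑ m ∈ range (n + 1), Fcoef a k n (m + 1) y * iteratedDeriv m f y)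
        (∑ m ∈ range (n + 1), (deriv (Fcoef a k n (m + 1)) x * iteratedDeriv m f x
          + Fcoef a k n (m + 1) x * iteratedDeriv (m + 1) f x)) x := by
      refine HasDerivAt.fun_sum fun m _ => ?_
      rw [iteratedDeriv_succ]
      exact (hasDeriv (contDiffOn_Fcoef hs ha hk ha0 n (m + 1))).mul
        (hasDeriv (hf.iteratedDeriv_of_isOpen hs m))
    have hrhs := (((hasDeriv hE.1).fun_mul (hasDeriv hu)).fun_add
      ((hasDeriv hE.2).fun_mul (hasDeriv (hu.deriv_of_isOpen hs le_rfl)))).fun_add hsum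
    rw [iteratedDeriv_succ, (ih.eventuallyEq_of_mem (hs.mem_nhds hx)).deriv_eq, hrhs.deriv,
      deriv_deriv_eq_of_solution hs ha ha0 hu hode hx]
    simp only [Ecoef, Fcoef, add_mul, sum_add_distrib]
    rw [sum_range_succ (fun m => deriv (Fcoef a k n (m + 1)) x * iteratedDeriv m f x) (n + 1),
      sum_range_succ' (fun m => Fcoef a k n m x * iteratedDeriv m f x),
      Fcoef_eq_zero_of_le (n := n) (m := n + 1 + 1) (by omega), Fcoef_zero]
    simp only [one_div, deriv_zero, Pi.zero_apply, zero_mul, add_zero, iteratedDeriv_zero]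
    ring

end SolutionDerivatives

theorem sum_Icc_Ej0_smul {a : ℝ → ℝ} {k : ℝ → ℂ} {xb : ℝ} {B : ℕ} (h : ℝ) (c : ℂ) :
    ∑ j ∈ Icc 2 B, ((j ! : ℝ)⁻¹ * h ^ j) • (Ej0 a k j xb * c) = (EPoly0 a k xb B h - 1) * c := by
  rw [EPoly0, add_sub_cancel_left, sum_mul]
  refine sum_congr rfl fun j _ => ?_
  rw [Complex.real_smul]
  push_cast
  ring

theorem sum_Icc_Ej1_smul {a : ℝ → ℝ} {k : ℝ → ℂ} {xb : ℝ} {B : ℕ} (h : ℝ) (c : ℂ) :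
    ∑ j ∈ Icc 2 B, ((j ! : ℝ)⁻¹ * h ^ j) • (Ej1 a k j xb * c)
      = h * (EPoly1 a k xb B h - 1) * c := by
  rw [EPoly1, add_sub_cancel_left, mul_sum, sum_mul]
  refine sum_congr rfl fun j hj => ?_
  obtain ⟨i, rfl⟩ : ∃ i, j = i + 1 := ⟨j - 1, by grind⟩
  rw [Complex.real_smul]
  push_cast
  ring

theorem sum_Icc_Fjl_smul {a : ℝ → ℝ} {k : ℝ → ℂ} {xb : ℝ} {B : ℕ} (h : ℝ) (g : ℕ → ℂ) :
    ∑ j ∈ Icc 2 B, ((j ! : ℝ)⁻¹ * h ^ j) • ∑ ℓ ∈ range (j - 1), Fjl a k j ℓ xb * g ℓ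
      = ∑ ℓ ∈ range (B - 1), (h : ℂ) ^ (ℓ + 2) * FPoly a k xb ℓ B h * g ℓ := by
  simp only [smul_sum, FPoly, mul_sum, sum_mul]
  rw [sum_comm' (t' := range (B - 1)) (s' := fun ℓ => Icc (ℓ + 2) B) (fun j ℓ => by
    simp only [mem_Icc, mem_range]; omega)]
  refine sum_congr rfl fun ℓ _ => sum_congr rfl fun j hj => ?_
  obtain ⟨i, rfl⟩ : ∃ i, j = ℓ + 2 + i := ⟨j - (ℓ + 2), by grind⟩
  rw [Complex.real_smul]
  push_cast
  simp only [show ℓ + 2 + i - ℓ - 2 = i by omega]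
  ring

theorem taylorSum_eq_EPoly {a : ℝ → ℝ} {k : ℝ → ℂ} {xb : ℝ} {B : ℕ} (hB : 1 ≤ B)
    (U g : ℕ → ℂ)
    (hU : ∀ j ∈ Icc 2 B, U j = Ej0 a k j xb * U 0 + Ej1 a k j xb * U 1
      + ∑ ℓ ∈ range (j - 1), Fjl a k j ℓ xb * g ℓ) (h : ℝ) :
    ∑ j ∈ range (B + 1), ((j ! : ℝ)⁻¹ * h ^ j) • U j
      = EPoly0 a k xb B h * U 0 + h * EPoly1 a k xb B h * U 1
        + ∑ ℓ ∈ range (B - 1), (h : ℂ) ^ (ℓ + 2) * FPoly a k xb ℓ B h * g ℓ := by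
  rw [range_eq_Ico, ← sum_Ico_consecutive _ (Nat.zero_le 2) (by omega : 2 ≤ B + 1),
    Ico_add_one_right_eq_Icc, sum_congr (s₁ := Icc 2 B) rfl fun j hj => by rw [hU j hj]]
  simp only [smul_add, sum_add_distrib, sum_Icc_Ej0_smul, sum_Icc_Ej1_smul, sum_Icc_Fjl_smul]
  simp only [Nat.Ico_zero_eq_range, sum_range_succ, range_one, sum_singleton, Complex.real_smul,
    Nat.factorial_zero, Nat.factorial_one, Nat.cast_one, inv_one, pow_zero, pow_one,
    Complex.ofReal_one, Complex.ofReal_mul, one_mul]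
  ring

theorem solution_expansion_isBigO {s : Set ℝ} {a : ℝ → ℝ} {k f u : ℝ → ℂ} {xb : ℝ} {B : ℕ}
    (hs : IsOpen s) (ha : ContDiffOn ℝ ∞ a s) (hk : ContDiffOn ℝ ∞ k s)
    (hf : ContDiffOn ℝ ∞ f s) (ha0 : ∀ x ∈ s, a x ≠ 0) (hu : ContDiffOn ℝ ∞ u s)
    (hode : ∀ x ∈ s, deriv (fun y => (a y : ℂ) * deriv u y) x + k x * u x = f x)
    (hxb : xb ∈ s) (hB : 1 ≤ B) :
    (fun h : ℝ => (u (xb + h) - EPoly0 a k xb B h * u xb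
        - ∑ ℓ ∈ range (B - 1), (h : ℂ) ^ (ℓ + 2) * FPoly a k xb ℓ B h * iteratedDeriv ℓ f xb)
      - ((h : ℂ) * EPoly1 a k xb B h * deriv u xb
        + (h : ℂ) ^ (B + 1) * (iteratedDeriv (B + 1) u xb / (B + 1)!)))
      =O[𝓝 0] fun h => h ^ (B + 2) := by
  have hU : ∀ j ∈ Icc 2 B, iteratedDeriv j u xb = Ej0 a k j xb * iteratedDeriv 0 u xb
      + Ej1 a k j xb * iteratedDeriv 1 u xb
      + ∑ ℓ ∈ range (j - 1), Fjl a k j ℓ xb * iteratedDeriv ℓ f xb := by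
    intro j hj
    obtain ⟨n, rfl⟩ : ∃ n, j = n + 2 := ⟨j - 2, by grind⟩
    rw [iteratedDeriv_zero, iteratedDeriv_one]
    exact iteratedDeriv_add_two_eqOn hs ha hk hf ha0 hu hode n hxb
  refine (taylor_isBigO_of_isOpen (n := B + 2) hs hxb (hu.of_le (WithTop.coe_le_coe.2 le_top)))
    |>.congr_left fun h => ?_
  rw [sum_range_succ, taylorSum_eq_EPoly hB _ _ hU h, Complex.real_smul]
  push_cast
  simp only [iteratedDeriv_zero, iteratedDeriv_one]
  ring

noncomputable def EPoly1Poly (a : ℝ → ℝ) (k : ℝ → ℂ) (xb : ℝ) (B : ℕ) : ℂ[X] :=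
  1 + ∑ j ∈ Icc 2 B, C (Ej1 a k j xb / j !) * X ^ (j - 1)

theorem EPoly1Poly_eval (a : ℝ → ℝ) (k : ℝ → ℂ) (xb : ℝ) (B : ℕ) (h : ℝ) :
    (EPoly1Poly a k xb B).eval (h : ℂ) = EPoly1 a k xb B h := by
  simp only [EPoly1Poly, EPoly1, eval_add, eval_one, eval_finsetSum, eval_mul, eval_C, eval_pow,
    eval_X]
  congr 1
  exact sum_congr rfl fun j _ => by ring

-- The unprimed values belong to `+h`, the primed ones to `-h`, and `z = h`.
theorem scheme_residual_eq {L : ℕ} (hL : 1 ≤ L) (p p' e e' v v' v₀ z : ℂ)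
    (F F' g : ℕ → ℂ) :
    -p' * v' + (p * e + p' * e') * v₀ + -p * v
      - z ^ 2 * ∑ ℓ ∈ range L,
          (-(if ℓ = 0 then 1 else 0) - p * F ℓ - (-1) ^ ℓ * p' * F' ℓ) * z ^ ℓ * g ℓ
      - z ^ 2 * g 0
    = -(p * (v - e * v₀ - ∑ ℓ ∈ range L, z ^ (ℓ + 2) * F ℓ * g ℓ)
      + p' * (v' - e' * v₀ - ∑ ℓ ∈ range L, (-z) ^ (ℓ + 2) * F' ℓ * g ℓ)) := by
  have hδ : ∑ ℓ ∈ range L, (if ℓ = 0 then 1 else 0) * z ^ ℓ * g ℓ = g 0 := by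
    simp [ite_mul, show L ≠ 0 by omega]
  simp only [sub_mul, neg_mul, sum_sub_distrib, sum_neg_distrib, hδ, mul_sub, mul_sum, neg_pow z]
  ring_nf

theorem particular_compact_scheme_accuracy_order_general
    (p q : ℝ) (a : ℝ → ℝ) (k f : ℝ → ℂ)
    (ha : ContDiffOn ℝ (⊤ : ℕ∞) a (Set.Ioo p q))
    (hk : ContDiffOn ℝ (⊤ : ℕ∞) k (Set.Ioo p q))
    (hf : ContDiffOn ℝ (⊤ : ℕ∞) f (Set.Ioo p q))
    (hapos : ∀ x ∈ Set.Ioo p q, 0 < a x)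
    (xb : ℝ) (hxb : xb ∈ Set.Ioo p q) (M : ℕ) (hM : 2 ≤ M) (hMeven : Even M)
    (P : Polynomial ℂ)
    (hP : (fun h : ℝ => Polynomial.eval ((h : ℂ)) P * EPoly1 a k xb M h - 1)
      =O[𝓝 (0 : ℝ)] fun h : ℝ => h ^ M) :
    ∀ u : ℝ → ℂ, ContDiffOn ℝ (⊤ : ℕ∞) u (Set.Ioo p q) →
      (∀ x ∈ Set.Ioo p q, deriv (fun y => (a y : ℂ) * deriv u y) x + k x * u x = f x) →
      (fun h : ℝ =>
          (-Polynomial.eval (-(h : ℂ)) P) * u (xb - h)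
          + (Polynomial.eval ((h : ℂ)) P * EPoly0 a k xb M h
              + Polynomial.eval (-(h : ℂ)) P * EPoly0 a k xb M (-h)) * u xb
          + (-Polynomial.eval ((h : ℂ)) P) * u (xb + h)
          - (h : ℂ) ^ 2 * ∑ ℓ ∈ Finset.range (M - 1),
              (-(if ℓ = 0 then 1 else 0)
                - Polynomial.eval ((h : ℂ)) P * FPoly a k xb ℓ M h
                - (-1 : ℂ) ^ ℓ * Polynomial.eval (-(h : ℂ)) P * FPoly a k xb ℓ M (-h))
                * (h : ℂ) ^ ℓ * iteratedDeriv ℓ f xb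
          - (h : ℂ) ^ 2 * f xb)
        =O[𝓝 (0 : ℝ)] fun h : ℝ => h ^ (M + 2) := by
  intro u hu hode
  have hdvd : X ^ M ∣ P * EPoly1Poly a k xb M - 1 :=
    X_pow_dvd_of_isBigO <| (hP.mono nhdsWithin_le_nhds).congr_left fun h => by
      simp [EPoly1Poly_eval]
  have hexp := solution_expansion_isBigO isOpen_Ioo ha hk hf (fun x hx => (hapos x hx).ne') hu
    hode hxb (by omega : 1 ≤ M)
  refine (eval_mul_add_eval_neg_mul_isBigO hMeven hdvd
    (hexp.congr_left fun h => by rw [EPoly1Poly_eval])).neg_left.congr_left fun h => ?_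
  have hf0 : f xb = iteratedDeriv 0 f xb := by simp
  rw [hf0, scheme_residual_eq (by omega), sub_eq_add_neg xb h]
  push_cast
  rfl

/-- the particular compact scheme (3.10)–(3.11) of the paper.  Let `M ≥ 2`
be even, and let `p` be the (unique) polynomial of degree at most `M−1` with
`p(h)·𝔈₁(h) − 1 = O(h^M)`.  Then the compact scheme with coefficients
`c₁(h) = −p(h)`, `c₋₁(h) = −p(−h)`, `c₀(h) = p(h)𝔈₀(h) + p(−h)𝔈₀(−h)` and
`d_ℓ(h) = −δ_{ℓ0} − p(h)𝔉_ℓ(h) − (−1)^ℓ p(−h)𝔉_ℓ(−h)` has accuracy order `M` at `x_b`: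
the (`h²`-scaled) truncation error is `O(h^{M+2})` for every smooth solution of
`(a u')' + k u = f` on `I`. -/
theorem particular_compact_scheme_accuracy_order
    (p q : ℝ) (a : ℝ → ℝ) (k f : ℝ → ℂ)
    (ha : ContDiffOn ℝ (⊤ : ℕ∞) a (Set.Ioo p q))
    (hk : ContDiffOn ℝ (⊤ : ℕ∞) k (Set.Ioo p q))
    (hf : ContDiffOn ℝ (⊤ : ℕ∞) f (Set.Ioo p q))
    (hapos : ∀ x ∈ Set.Ioo p q, 0 < a x)
    (xb : ℝ) (hxb : xb ∈ Set.Ioo p q) (M : ℕ) (hM : 2 ≤ M) (hMeven : Even M)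
    (P : Polynomial ℂ) (hPdeg : P.natDegree ≤ M - 1)
    (hP : (fun h : ℝ => Polynomial.eval ((h : ℂ)) P * EPoly1 a k xb M h - 1)
      =O[𝓝 (0 : ℝ)] fun h : ℝ => h ^ M) :
    ∀ u : ℝ → ℂ, ContDiffOn ℝ (⊤ : ℕ∞) u (Set.Ioo p q) →
      (∀ x ∈ Set.Ioo p q, deriv (fun y => (a y : ℂ) * deriv u y) x + k x * u x = f x) →
      (fun h : ℝ =>
          (-Polynomial.eval (-(h : ℂ)) P) * u (xb - h)
          + (Polynomial.eval ((h : ℂ)) P * EPoly0 a k xb M h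
              + Polynomial.eval (-(h : ℂ)) P * EPoly0 a k xb M (-h)) * u xb
          + (-Polynomial.eval ((h : ℂ)) P) * u (xb + h)
          - (h : ℂ) ^ 2 * ∑ ℓ ∈ Finset.range (M - 1),
              (-(if ℓ = 0 then 1 else 0)
                - Polynomial.eval ((h : ℂ)) P * FPoly a k xb ℓ M h
                - (-1 : ℂ) ^ ℓ * Polynomial.eval (-(h : ℂ)) P * FPoly a k xb ℓ M (-h))
                * (h : ℂ) ^ ℓ * iteratedDeriv ℓ f xb
          - (h : ℂ) ^ 2 * f xb)
        =O[𝓝 (0 : ℝ)] fun h : ℝ => h ^ (M + 2) :=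
  particular_compact_scheme_accuracy_order_general p q a k f ha hk hf hapos xb hxb M hM hMeven P hP
end
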